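/- arXiv:2509.18300 — 5 statements merged into one kernel-verified Lean document; each statement's English description precedes it below -/
import Mathlib

section
/- Let K be a field of characteristic 2, let a, b ∈ K, and let α, β be elements of an algebraic closure of K with α^2 − α = a and β^2 − β = b. If K(α) = K(β), then a − b lies in ℘(K) = {x^2 − x : x ∈ K}. -/
open IntermediateField Polynomial

/-- Let `K` be a field of characteristic 2, `a b ∈ K`, and `α β` in an
algebraic closure of `K` with `α² − α = a`, `β² − β = b`.  If `K(α) = K(β)` then
`a − b ∈ ℘(K) = {x² − x : x ∈ K}`. -/
theorem artin_schreier_same_extension (K : Type*) [Field K] [CharP K 2] (a b : K)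
    (α β : AlgebraicClosure K)
    (hα : α ^ 2 - α = algebraMap K (AlgebraicClosure K) a)
    (hβ : β ^ 2 - β = algebraMap K (AlgebraicClosure K) b)
    (h : IntermediateField.adjoin K {α} = IntermediateField.adjoin K {β}) :
    ∃ x : K, x ^ 2 - x = a - b := by
  haveI : CharP (AlgebraicClosure K) 2 := charP_of_injective_algebraMap (algebraMap K (AlgebraicClosure K)).injective 2
  have hinj := (algebraMap K (AlgebraicClosure K)).injective
  have h2 : (2 : AlgebraicClosure K) = 0 := by
    have := CharP.cast_eq_zero (AlgebraicClosure K) 2; push_cast at this; exact this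
  have h2K : (2 : K) = 0 := by
    have := CharP.cast_eq_zero K 2; push_cast at this; exact this
  by_cases hbot : α ∈ (⊥ : IntermediateField K (AlgebraicClosure K))
  · rw [IntermediateField.mem_bot] at hbot
    obtain ⟨x0, hx0⟩ := hbot
    have hβbot : β ∈ (⊥ : IntermediateField K (AlgebraicClosure K)) := by
      have hle : IntermediateField.adjoin K {α} ≤ ⊥ := by
        rw [IntermediateField.adjoin_simple_le_iff, IntermediateField.mem_bot]
        exact ⟨x0, hx0⟩
      exact hle (h ▸ IntermediateField.mem_adjoin_simple_self K β)
    rw [IntermediateField.mem_bot] at hβbot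
    obtain ⟨y, hy⟩ := hβbot
    refine ⟨x0 - y, hinj ?_⟩
    simp only [map_sub, map_pow]
    rw [hx0, hy]
    linear_combination hα - hβ + (β ^ 2 - α * β) * h2
  · -- α ∉ K
    have hβnot : β ∉ (⊥ : IntermediateField K (AlgebraicClosure K)) := by
      intro hc
      apply hbot
      have hle : IntermediateField.adjoin K {β} ≤ ⊥ :=
        (IntermediateField.adjoin_simple_le_iff).mpr hc
      exact hle (h ▸ IntermediateField.mem_adjoin_simple_self K α)
    have hint : IsIntegral K α := Algebra.IsIntegral.isIntegral α
    have hβmem : β ∈ IntermediateField.adjoin K {α} :=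
      h ▸ IntermediateField.mem_adjoin_simple_self K β
    have hroot : Polynomial.aeval α (X ^ 2 - X - C a : K[X]) = 0 := by
      simp only [map_sub, map_pow, aeval_X, aeval_C]
      rw [sub_eq_zero, hα]
    have hdvd : minpoly K α ∣ (X ^ 2 - X - C a : K[X]) := minpoly.dvd K α hroot
    have hpdeg : (X ^ 2 - X - C a : K[X]).natDegree = 2 := by
      compute_degree!
    have hp0 : (X ^ 2 - X - C a : K[X]) ≠ 0 := by
      intro hc
      rw [hc] at hpdeg; simp at hpdeg
    have hle2 : (minpoly K α).natDegree ≤ 2 := by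
      have := Polynomial.natDegree_le_of_dvd hdvd hp0
      omega
    have hne1 : (minpoly K α).natDegree ≠ 1 := by
      intro hc
      have hone : (minpoly K α).degree = 1 := by
        rw [Polynomial.degree_eq_natDegree (minpoly.ne_zero hint), hc]; rfl
      rw [minpoly.degree_eq_one_iff] at hone
      exact hbot (IntermediateField.mem_bot.mpr hone)
    have hpos : 0 < (minpoly K α).natDegree := minpoly.natDegree_pos hint
    have hdeg2 : (minpoly K α).natDegree = 2 := by omega
    obtain ⟨f, hfdeg, hfval⟩ :=
      (IntermediateField.adjoin.powerBasis hint).exists_eq_aeval (⟨β, hβmem⟩ : K⟮α⟯)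
    rw [IntermediateField.adjoin.powerBasis_dim, hdeg2] at hfdeg
    set c := f.coeff 0 with hc
    set d := f.coeff 1 with hd
    have hf : f = C d * X + C c := by
      exact Polynomial.eq_X_add_C_of_natDegree_le_one (by omega)
    have hβeq : β = algebraMap K (AlgebraicClosure K) d * α + algebraMap K (AlgebraicClosure K) c := by
      have hcong := congrArg (K⟮α⟯.val) hfval
      rw [← Polynomial.aeval_algHom_apply, hf] at hcong
      simpa using hcong
    have key : algebraMap K (AlgebraicClosure K) (d ^ 2 - d) * α
        = algebraMap K (AlgebraicClosure K) (b - c ^ 2 + c - d ^ 2 * a) := by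
      simp only [map_sub, map_add, map_mul, map_pow]
      rw [hβeq] at hβ
      linear_combination hβ - (algebraMap K (AlgebraicClosure K) d) ^ 2 * hα
        - (algebraMap K (AlgebraicClosure K) c * algebraMap K (AlgebraicClosure K) d * α) * h2
    by_cases hdd : d ^ 2 - d = 0
    · rw [hdd, map_zero, zero_mul] at key
      have hkey : b - c ^ 2 + c - d ^ 2 * a = 0 := by
        apply hinj; rw [← key, map_zero]
      have hfac : d * (d - 1) = 0 := by linear_combination hdd
      rcases mul_eq_zero.mp hfac with h0 | h1
      · exfalso
        apply hβnot
        rw [IntermediateField.mem_bot]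
        exact ⟨c, by rw [hβeq, h0, map_zero, zero_mul, zero_add]⟩
      · have hd1 : d = 1 := by linear_combination h1
        refine ⟨c, ?_⟩
        rw [hd1] at hkey
        linear_combination -hkey + (b - a) * h2K
    · exfalso
      apply hbot
      rw [IntermediateField.mem_bot]
      refine ⟨(b - c ^ 2 + c - d ^ 2 * a) / (d ^ 2 - d), ?_⟩
      have hne : algebraMap K (AlgebraicClosure K) (d ^ 2 - d) ≠ 0 := fun hc0 =>
        hdd (hinj (by rw [hc0, map_zero]))
      rw [map_div₀, div_eq_iff hne]
      rw [← key]; ring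
end

section
/- Let K be a local field of characteristic 2 (i.e. K ≅ F_q((u)) for q a power of 2) with ring of integers O_K, maximal ideal M_K, and residue field F_4. Then ℘(K) ∩ M_K^{-1} = ℘(O_K) = F_2 + M_K, where elements of F_4 are identified with their Teichmüller lifts (the constants). -/
noncomputable section

/-- The field with 4 elements. -/
abbrev F4 := GaloisField 2 2

/-- `K = F₄((u))`, a local field of characteristic 2 with residue field `F₄`. -/
abbrev Kfield := LaurentSeries F4

/-- The ring of integers `O_K = F₄[[u]]` inside `K`. -/
def OK : Set Kfield := Set.range (HahnSeries.ofPowerSeries ℤ F4)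

/-- The uniformizer `u` of `K`. -/
def uK : Kfield := HahnSeries.ofPowerSeries ℤ F4 PowerSeries.X

/-! ### Auxiliary instances and lemmas -/

instance : Fact (Nat.Prime 2) := ⟨Nat.prime_two⟩
instance : Fintype F4 := Fintype.ofFinite F4

instance : CharP (PowerSeries F4) 2 :=
  charP_of_injective_ringHom (f := PowerSeries.C (R := F4))
    (fun a b h => by simpa using congrArg (PowerSeries.constantCoeff (R := F4)) h) 2

instance : CharP Kfield 2 :=
  charP_of_injective_ringHom (f := HahnSeries.C (Γ := ℤ) (R := F4))
    (fun a b h => by simpa using congrArg (fun x => HahnSeries.coeff x 0) h) 2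

lemma mem_OK {x : Kfield} : x ∈ OK ↔ ∀ n : ℤ, n < 0 → x.coeff n = 0 := by
  constructor
  · rintro ⟨p, rfl⟩ n hn
    rw [HahnSeries.ofPowerSeries_apply]
    apply HahnSeries.embDomain_notin_range
    rintro ⟨m, hm⟩
    change (m : ℤ) = n at hm
    omega
  · intro h
    refine ⟨PowerSeries.mk (fun m => x.coeff m), ?_⟩
    ext n
    rcases le_or_gt 0 n with hn | hn
    · obtain ⟨m, rfl⟩ := Int.eq_ofNat_of_zero_le hn
      rw [HahnSeries.ofPowerSeries_apply_coeff, PowerSeries.coeff_mk]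
    · rw [h n hn, HahnSeries.ofPowerSeries_apply]
      apply HahnSeries.embDomain_notin_range
      rintro ⟨m, hm⟩
      change (m : ℤ) = n at hm
      omega

lemma uK_eq : uK = HahnSeries.single (1 : ℤ) 1 := HahnSeries.ofPowerSeries_X

lemma uK_ne_zero : uK ≠ 0 := by
  rw [uK_eq]; exact HahnSeries.single_ne_zero one_ne_zero

open PowerSeries in
/-- Artin–Schreier equations with parameter in the maximal ideal are solvable in `F₄[[X]]`. -/
lemma exists_AS (g : PowerSeries F4) (hg : (PowerSeries.X : PowerSeries F4) ∣ g) :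
    ∃ t : PowerSeries F4, t ^ 2 - t = g := by
  classical
  set s : ℕ → PowerSeries F4 := fun k => ∑ i ∈ Finset.range k, g ^ (2 ^ i) with hs
  have hgp : ∀ (i n : ℕ), n < 2 ^ i → coeff n (g ^ 2 ^ i) = 0 := fun i n hn =>
    (PowerSeries.X_pow_dvd_iff.1 (pow_dvd_pow_of_dvd hg _)) n hn
  have hscoeff : ∀ (n a b : ℕ), a ≤ b → n < 2 ^ a →
      coeff n (s a) = coeff n (s b) := by
    intro n a b hab hn
    rw [hs]
    simp only
    rw [← Finset.sum_range_add_sum_Ico _ hab, map_add, left_eq_add, map_sum]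
    refine Finset.sum_eq_zero fun i hi => hgp i n ?_
    exact hn.trans_le (Nat.pow_le_pow_right (by norm_num) (Finset.mem_Ico.1 hi).1)
  set t : PowerSeries F4 := PowerSeries.mk fun n => coeff n (s (n + 1)) with htdef
  have key : ∀ (k n : ℕ), n < 2 ^ k → coeff n t = coeff n (s k) := by
    intro k n hn
    have h1 : coeff n t = coeff n (s (n + 1)) := coeff_mk _ _
    rcases le_total (n + 1) k with h | h
    · rw [h1, hscoeff n (n+1) k h
        ((Nat.lt_two_pow_self (n := n)).trans_le (Nat.pow_le_pow_right (by norm_num) n.le_succ))]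
    · rw [h1, hscoeff n k (n+1) h hn]
  have hdiff : ∀ k : ℕ, (X : PowerSeries F4) ^ (2 ^ k) ∣ (t - s k) := by
    intro k
    rw [PowerSeries.X_pow_dvd_iff]
    intro m hm
    rw [map_sub, key k m hm, sub_self]
  have hsq : ∀ k : ℕ, s k ^ 2 + s k = g + g ^ (2 ^ k) := by
    intro k
    induction k with
    | zero => simp [hs, CharTwo.add_self_eq_zero]
    | succ k ih =>
      have hstep : s (k + 1) = s k + g ^ (2 ^ k) := Finset.sum_range_succ _ _
      have hh : (g ^ 2 ^ k) ^ 2 = g ^ 2 ^ (k + 1) := by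
        rw [← pow_mul, pow_succ]
      calc s (k+1) ^ 2 + s (k+1) = (s k ^ 2 + s k) + ((g ^ 2 ^ k) ^ 2 + g ^ 2 ^ k) := by
            rw [hstep, CharTwo.add_sq]; ring
        _ = g + g ^ 2 ^ k + (g ^ 2 ^ (k+1) + g ^ 2 ^ k) := by rw [ih, hh]
        _ = g + g ^ 2 ^ (k+1) + (g ^ 2 ^ k + g ^ 2 ^ k) := by ring
        _ = g + g ^ 2 ^ (k+1) := by rw [CharTwo.add_self_eq_zero, add_zero]
  refine ⟨t, ?_⟩
  rw [CharTwo.sub_eq_add]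
  ext n
  set k := n + 1 with hk
  have hn2 : n < 2 ^ k :=
    (Nat.lt_two_pow_self (n := n)).trans_le (Nat.pow_le_pow_right (by norm_num) n.le_succ)
  set d : PowerSeries F4 := t - s k with hd
  have hdec : t ^ 2 + t = (d ^ 2 + d) + (g + g ^ (2 ^ k)) := by
    rw [← hsq k]
    have ht : t = d + s k := by rw [hd]; ring
    rw [ht, CharTwo.add_sq]; ring
  have hdvd : (X : PowerSeries F4) ^ (2 ^ k) ∣ d := hdiff k
  have hcd : coeff n d = 0 := (PowerSeries.X_pow_dvd_iff.1 hdvd) n hn2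
  have hcd2 : coeff n (d ^ 2) = 0 := by
    refine (PowerSeries.X_pow_dvd_iff.1 (dvd_trans hdvd ?_)) n hn2
    exact dvd_pow_self d (by norm_num)
  rw [hdec, map_add, map_add, map_add, hcd, hcd2, hgp k n hn2]
  ring

lemma F4_card : Fintype.card F4 = 4 := by
  have h := GaloisField.card 2 2 (by norm_num)
  rwa [Nat.card_eq_fintype_card, show (2:ℕ)^2 = 4 from rfl] at h

lemma F4_pow4 (a : F4) : a ^ 4 = a := by
  have := FiniteField.pow_card a
  rwa [F4_card] at this

lemma F4_sq_eq_self_iff (b : F4) (hb : b ^ 2 = b) : b = 0 ∨ b = 1 := by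
  have : b * (b - 1) = 0 := by linear_combination hb
  rcases mul_eq_zero.mp this with h | h
  · exact Or.inl h
  · exact Or.inr (sub_eq_zero.mp h)

lemma F4_trace_mem (a : F4) : a ^ 2 - a = 0 ∨ a ^ 2 - a = 1 := by
  apply F4_sq_eq_self_iff
  have h4 : a ^ 4 = a := F4_pow4 a
  have h2 : (2 : F4) = 0 := by
    have h' : (2 : F4) = ((2 : ℕ) : F4) := by norm_num
    rw [h', CharP.cast_eq_zero F4 2]
  calc (a ^ 2 - a) ^ 2 = a ^ 4 - 2 * a ^ 3 + a ^ 2 := by ring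
    _ = a + a ^ 2 := by rw [h4, h2]; ring
    _ = a ^ 2 - a := by rw [CharTwo.sub_eq_add]; ring

lemma F4_exists_trace_one : ∃ a : F4, a ^ 2 - a = 1 := by
  classical
  have h2 : ∃ a : F4, a ^ 2 ≠ a := by
    by_contra h
    push_neg at h
    have hsub : (Finset.univ : Finset F4) ⊆ {0, 1} := by
      intro a _
      rcases F4_sq_eq_self_iff a (h a) with ha | ha <;> simp [ha]
    have hle := Finset.card_le_card hsub
    have h01 : ({0, 1} : Finset F4).card ≤ 2 :=
      (Finset.card_insert_le _ _).trans (by simp)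
    rw [Finset.card_univ, F4_card] at hle
    omega
  obtain ⟨a, ha⟩ := h2
  refine ⟨a, ?_⟩
  rcases F4_trace_mem a with h | h
  · exact absurd (by linear_combination h) ha
  · exact h

/-- `℘(K) ∩ M_K⁻¹ = ℘(O_K) = F₂ + M_K`, where `℘(x) = x² − x`,
`M_K⁻¹ = u⁻¹·O_K`, `M_K = u·O_K`, and `F₂ = {0, 1}` consists of the constants. -/
theorem wp_cap_Minv :
    ({y : Kfield | ∃ x : Kfield, x ^ 2 - x = y} ∩
        {y : Kfield | ∃ x ∈ OK, y = uK⁻¹ * x}) =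
      {y : Kfield | ∃ x ∈ OK, x ^ 2 - x = y} ∧
    {y : Kfield | ∃ x ∈ OK, x ^ 2 - x = y} =
      {y : Kfield | ∃ c : F4, (c = 0 ∨ c = 1) ∧ ∃ m ∈ OK, y = HahnSeries.C c + uK * m} := by
  constructor
  · ext y
    simp only [Set.mem_inter_iff, Set.mem_setOf_eq]
    constructor
    · rintro ⟨⟨x, rfl⟩, z, hz, hy⟩
      refine ⟨x, ?_, rfl⟩
      rw [mem_OK]
      intro n hn
      by_contra hc
      have hx0 : x ≠ 0 := fun h => hc (by rw [h]; simp)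
      have hv : x.order ≤ n := HahnSeries.order_le_of_coeff_ne_zero hc
      obtain ⟨v, hvd⟩ : ∃ v, x.order = v := ⟨_, rfl⟩
      rw [hvd] at hv
      have hvneg : v < 0 := lt_of_le_of_lt hv hn
      have h1 : (x * x).coeff (v + v) = x.leadingCoeff * x.leadingCoeff := by
        rw [← hvd]; exact HahnSeries.coeff_mul_order_add_order x x
      have hlc : x.leadingCoeff ≠ 0 := HahnSeries.leadingCoeff_ne_zero.2 hx0
      have h2 : (x ^ 2 - x).coeff (v + v) ≠ 0 := by
        rw [HahnSeries.coeff_sub, pow_two x, h1,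
          HahnSeries.coeff_eq_zero_of_lt_order (show v + v < x.order by rw [hvd]; omega), sub_zero]
        exact mul_ne_zero hlc hlc
      have hzz : z = uK * (x ^ 2 - x) := by
        rw [hy, ← mul_assoc, mul_inv_cancel₀ uK_ne_zero, one_mul]
      have hz' := (mem_OK).1 hz (v + v + 1) (by omega)
      rw [hzz, uK_eq, HahnSeries.coeff_single_mul_add, one_mul] at hz'
      exact h2 hz'
    · rintro ⟨x, hx, rfl⟩
      obtain ⟨p, rfl⟩ := hx
      refine ⟨⟨HahnSeries.ofPowerSeries ℤ F4 p, rfl⟩,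
        uK * ((HahnSeries.ofPowerSeries ℤ F4 p) ^ 2 - HahnSeries.ofPowerSeries ℤ F4 p),
        ⟨PowerSeries.X * (p ^ 2 - p), by rw [map_mul, map_sub, map_pow]; rfl⟩, ?_⟩
      rw [← mul_assoc, inv_mul_cancel₀ uK_ne_zero, one_mul]
  · ext y
    simp only [Set.mem_setOf_eq]
    constructor
    · rintro ⟨x, ⟨p, rfl⟩, rfl⟩
      set a := PowerSeries.constantCoeff (R := F4) p with ha
      obtain ⟨q, hq⟩ : (PowerSeries.X : PowerSeries F4) ∣ (p - PowerSeries.C (R := F4) a) :=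
        PowerSeries.X_dvd_iff.2 (by simp [ha])
      have hp : p = PowerSeries.C (R := F4) a + PowerSeries.X * q := by linear_combination hq
      have hps : p ^ 2 - p =
          PowerSeries.C (R := F4) (a ^ 2 - a) + PowerSeries.X * (PowerSeries.X * q ^ 2 + q) := by
        rw [hp, map_sub, map_pow]
        simp only [CharTwo.sub_eq_add]
        rw [CharTwo.add_sq]
        ring
      refine ⟨a ^ 2 - a, F4_trace_mem a,
        HahnSeries.ofPowerSeries ℤ F4 (PowerSeries.X * q ^ 2 + q), ⟨_, rfl⟩, ?_⟩
      rw [← map_pow, ← map_sub, hps, map_add, map_mul, HahnSeries.ofPowerSeries_C]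
      rfl
    · rintro ⟨c, hc, m, ⟨p, rfl⟩, rfl⟩
      obtain ⟨a, haa⟩ : ∃ a : F4, a ^ 2 - a = c := by
        rcases hc with rfl | rfl
        · exact ⟨0, by ring⟩
        · exact F4_exists_trace_one
      obtain ⟨t, ht⟩ := exists_AS (PowerSeries.X * p) ⟨p, rfl⟩
      refine ⟨HahnSeries.C a + HahnSeries.ofPowerSeries ℤ F4 t,
        ⟨PowerSeries.C (R := F4) a + t, by rw [map_add, HahnSeries.ofPowerSeries_C]⟩, ?_⟩
      have h1 : HahnSeries.C a ^ 2 - HahnSeries.C a = (HahnSeries.C c : Kfield) := by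
        rw [← map_pow, ← map_sub, haa]
      have h2 : (HahnSeries.ofPowerSeries ℤ F4 t) ^ 2 - HahnSeries.ofPowerSeries ℤ F4 t =
          uK * HahnSeries.ofPowerSeries ℤ F4 p := by
        rw [← map_pow, ← map_sub, ht, map_mul]; rfl
      calc (HahnSeries.C a + HahnSeries.ofPowerSeries ℤ F4 t) ^ 2 -
            (HahnSeries.C a + HahnSeries.ofPowerSeries ℤ F4 t)
          = (HahnSeries.C a ^ 2 - HahnSeries.C a) +
            ((HahnSeries.ofPowerSeries ℤ F4 t) ^ 2 - HahnSeries.ofPowerSeries ℤ F4 t) := by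
            rw [CharTwo.add_sq]; ring
        _ = HahnSeries.C c + uK * HahnSeries.ofPowerSeries ℤ F4 p := by rw [h1, h2]
end
end

section
/- Let F_4 = {0,1,s,s^2} with s^2+s+1=0. In the field L_0 = M_0(α_3), where M_0 = F_4((u))(Y) with Y^4+Y = u^{-1} and α_3^2 − α_3 = Y^3, set t = Y·α_3^{-1}. Then N_{L_0/M_0}(t) = Y^{-1}, and the series X = σ_1(t) (where σ_1(α_3) = α_3 + s^2Y + s^2 and σ_1(Y) = Y + s) satisfies the polynomial equation (t^2+1)X^2 + X + s·t^2 + t = 0. -/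
set_option maxHeartbeats 1000000


/-- in `L₀ = M₀(α₃)` with `α₃² = α₃ + Y³`, setting `t = Y·α₃⁻¹`, the norm
`N_{L₀/M₀}(t) = t·σ₃(t) = Y²/(α₃(α₃+1))` equals `Y⁻¹`, and
`X = σ₁(t) = (Y+s)/(α₃+s²Y+s²)` satisfies `(t²+1)X² + X + s·t² + t = 0`. -/
theorem sigma1_polynomial_relation (L : Type*) [Field L] [CharP L 2]
    (s Y α₃ : L) (hs : s ^ 2 + s + 1 = 0)
    (hα : α₃ ^ 2 = α₃ + Y ^ 3)
    (hY0 : Y ≠ 0) (hα0 : α₃ ≠ 0) (hα1 : α₃ + 1 ≠ 0)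
    (hden : α₃ + s ^ 2 * Y + s ^ 2 ≠ 0) :
    (Y / α₃) * (Y / (α₃ + 1)) = Y⁻¹ ∧
    ((Y / α₃) ^ 2 + 1) * ((Y + s) / (α₃ + s ^ 2 * Y + s ^ 2)) ^ 2 +
        (Y + s) / (α₃ + s ^ 2 * Y + s ^ 2) + s * (Y / α₃) ^ 2 + Y / α₃ = 0 := by
  have h2 : (2 : L) = 0 := by
    have := CharP.cast_eq_zero L 2
    exact_mod_cast this
  constructor
  · field_simp
    linear_combination (-1 : L) * hα + (-α₃) * h2
  · have key : (Y^2 + α₃^2) * (Y + s)^2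
        + α₃^2 * (α₃ + s^2 * Y + s^2) * (Y + s)
        + (s * Y^2 + Y * α₃) * (α₃ + s^2 * Y + s^2)^2 = 0 := by
      linear_combination
        ((0:L)*α₃^2 + (2:L)*Y^1*α₃^2 + (2:L)*Y^2 + (-2:L)*Y^2*α₃^1 + (3:L)*Y^2*α₃^2 + (2:L)*Y^3 + (-2:L)*Y^3*α₃^1 + Y^4 + s^1*α₃^2 + (-1:L)*s^1*Y^1*α₃^1 + s^1*Y^1*α₃^2 + (0:L)*s^1*Y^2*α₃^1 + s^1*Y^3*α₃^1 + s^2*Y^1*α₃^1 + (-1:L)*s^2*Y^2 + (2:L)*s^2*Y^2*α₃^1 + (-2:L)*s^2*Y^3 + s^2*Y^3*α₃^1 + (-1:L)*s^2*Y^4 + s^3*Y^2 + (2:L)*s^3*Y^3 + s^3*Y^4) * hs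
        + ((0:L) + (2:L)*Y^1*α₃^1 + (-2:L)*Y^2 + s^1*α₃^1 + (-1:L)*s^1*Y^1 + (-2:L)*s^1*Y^2) * hα
        + ((-1:L)*Y^2 + (-1:L)*Y^3 + Y^3*α₃^1 + Y^4*α₃^1 + (-1:L)*Y^5 + (-1:L)*s^1*Y^2 + s^1*Y^3*α₃^1 + (-1:L)*s^1*Y^4 + (-1:L)*s^1*Y^5) * h2
    have ha : α₃ * α₃⁻¹ = 1 := mul_inv_cancel₀ hα0
    have hb : (α₃ + s ^ 2 * Y + s ^ 2) * (α₃ + s ^ 2 * Y + s ^ 2)⁻¹ = 1 := mul_inv_cancel₀ hden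
    linear_combination (α₃⁻¹^2 * (α₃ + s ^ 2 * Y + s ^ 2)⁻¹^2) * key
      - ((α₃*α₃⁻¹+1)*(Y+s)^2*(α₃ + s ^ 2 * Y + s ^ 2)⁻¹^2
          + (Y+s)*(α₃ + s ^ 2 * Y + s ^ 2)⁻¹*(α₃*α₃⁻¹+1) + Y*α₃⁻¹) * ha
      - ((Y+s)*α₃^2*α₃⁻¹^2*(α₃ + s ^ 2 * Y + s ^ 2)⁻¹
          + s*Y^2*α₃⁻¹^2*((α₃ + s ^ 2 * Y + s ^ 2)*(α₃ + s ^ 2 * Y + s ^ 2)⁻¹+1)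
          + Y*α₃*α₃⁻¹^2*((α₃ + s ^ 2 * Y + s ^ 2)*(α₃ + s ^ 2 * Y + s ^ 2)⁻¹+1)) * hb
end

section
/- Let F_4 = {0,1,s,s^2} with s^2+s+1=0 and let σ_0^2 ∈ N(F_4) denote the unique power series X = t + a_2 t^2 + ... ∈ F_4[[t]] satisfying t^2 X^2 + X + t = 0. Then σ_0^2 is an element of order 2 in the Nottingham group N(F_4), i.e. σ_0^2 ∘ σ_0^2 = t and σ_0^2 ≠ t. -/
noncomputable section

/-- Substitution (composition) of power series, valid when `ψ` has zero constant term. -/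
noncomputable def PowerSeries.comp {k : Type*} [CommRing k] (φ ψ : PowerSeries k) :
    PowerSeries k :=
  PowerSeries.mk fun n => ∑ i ∈ Finset.range (n + 1),
    PowerSeries.coeff i φ * PowerSeries.coeff n (ψ ^ i)

open PowerSeries Finset in
lemma aux_coeff_pow_eq_zero {k : Type*} [CommRing k] {ψ : PowerSeries k}
    (h : constantCoeff ψ = 0) {n i : ℕ} (h2 : n < i) : coeff n (ψ ^ i) = 0 :=
  X_pow_dvd_iff.mp (pow_dvd_pow_of_dvd (X_dvd_iff.mpr h) i) n h2

open PowerSeries Finset in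
lemma aux_coeff_comp {k : Type*} [CommRing k] (a ψ : PowerSeries k) (n : ℕ) :
    coeff n (a.comp ψ) = ∑ i ∈ range (n + 1), coeff i a * coeff n (ψ ^ i) := by
  simp [PowerSeries.comp]

open PowerSeries Finset Polynomial in
lemma aux_coeff_aeval {k : Type*} [CommRing k] {ψ : PowerSeries k}
    (h : constantCoeff ψ = 0) (P : Polynomial k) (n : ℕ) :
    coeff n (Polynomial.aeval ψ P) = ∑ i ∈ range (n + 1), P.coeff i * coeff n (ψ ^ i) := by
  have hd : P.natDegree < max (n + 1) (P.natDegree + 1) :=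
    lt_of_lt_of_le (Nat.lt_succ_self _) (le_max_right _ _)
  rw [aeval_eq_sum_range' hd, map_sum]
  rw [← Finset.sum_subset (Finset.range_subset_range.mpr (le_max_left (n + 1) (P.natDegree + 1)))]
  · exact Finset.sum_congr rfl fun i _ => by rw [PowerSeries.coeff_smul, smul_eq_mul]
  · intro i _ hi
    rw [PowerSeries.coeff_smul, aux_coeff_pow_eq_zero h (by simpa using hi), smul_zero]

open PowerSeries Finset Polynomial in
lemma aux_comp_eq_aeval {k : Type*} [CommRing k] {ψ : PowerSeries k}
    (h : constantCoeff ψ = 0) (a : PowerSeries k) {n N : ℕ} (hn : n < N) :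
    coeff n (a.comp ψ) = coeff n (Polynomial.aeval ψ (trunc N a)) := by
  rw [aux_coeff_comp, aux_coeff_aeval h]
  refine Finset.sum_congr rfl fun i hi => ?_
  rw [coeff_trunc, if_pos (lt_of_lt_of_le (Finset.mem_range.mp hi) hn)]

open PowerSeries Finset Polynomial in
lemma aux_comp_add {k : Type*} [CommRing k] (a b ψ : PowerSeries k) :
    (a + b).comp ψ = a.comp ψ + b.comp ψ := by
  ext n
  simp [aux_coeff_comp, add_mul, Finset.sum_add_distrib]

open PowerSeries Finset Polynomial in
lemma aux_comp_mul {k : Type*} [CommRing k] {ψ : PowerSeries k}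
    (h : constantCoeff ψ = 0) (a b : PowerSeries k) :
    (a * b).comp ψ = a.comp ψ * b.comp ψ := by
  ext n
  have key : coeff n ((a * b).comp ψ)
      = coeff n (Polynomial.aeval ψ (trunc (n + 1) a * trunc (n + 1) b)) := by
    rw [aux_comp_eq_aeval h _ (Nat.lt_succ_self n), aux_coeff_aeval h, aux_coeff_aeval h]
    refine Finset.sum_congr rfl fun i hi => ?_
    have hi' : i < n + 1 := Finset.mem_range.mp hi
    congr 1
    rw [coeff_trunc, if_pos hi', PowerSeries.coeff_mul, Polynomial.coeff_mul]
    refine Finset.sum_congr rfl fun p hp => ?_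
    have hp' := Finset.HasAntidiagonal.mem_antidiagonal.mp hp
    rw [coeff_trunc, coeff_trunc, if_pos, if_pos]
    · exact lt_of_le_of_lt (hp' ▸ Nat.le_add_left _ _) hi'
    · exact lt_of_le_of_lt (hp' ▸ Nat.le_add_right _ _) hi'
  rw [key, map_mul, PowerSeries.coeff_mul, PowerSeries.coeff_mul]
  refine Finset.sum_congr rfl fun p hp => ?_
  have hp' := Finset.HasAntidiagonal.mem_antidiagonal.mp hp
  rw [aux_comp_eq_aeval h a (show p.1 < n + 1 from
        Nat.lt_succ_of_le (hp' ▸ Nat.le_add_right _ _)),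
      aux_comp_eq_aeval h b (show p.2 < n + 1 from
        Nat.lt_succ_of_le (hp' ▸ Nat.le_add_left _ _))]

open PowerSeries Finset in
lemma aux_comp_X {k : Type*} [CommRing k] {ψ : PowerSeries k}
    (h : constantCoeff ψ = 0) : (PowerSeries.X : PowerSeries k).comp ψ = ψ := by
  ext n
  rw [aux_coeff_comp]
  rcases Nat.eq_zero_or_pos n with hn | hn
  · subst hn
    simpa [PowerSeries.coeff_X] using h.symm
  · rw [Finset.sum_eq_single 1]
    · simp
    · intro i _ hi
      rw [PowerSeries.coeff_X, if_neg hi, zero_mul]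
    · intro hmem
      exact absurd (Finset.mem_range.mpr (by omega)) (fun hh => hmem hh)

/-- the unique series `φ = t + a₂t² + ⋯ ∈ F₄[[t]]` with
`t²φ² + φ + t = 0` is an element of order 2 in the Nottingham group `N(F₄)`:
`φ ∘ φ = t` and `φ ≠ t`. -/
theorem sigma0_sq_order_two (φ : PowerSeries F4)
    (h0 : PowerSeries.constantCoeff φ = 0)
    (heq : (PowerSeries.X : PowerSeries F4) ^ 2 * φ ^ 2 + φ + PowerSeries.X = 0) :
    PowerSeries.comp φ φ = PowerSeries.X ∧ φ ≠ PowerSeries.X := by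
  set X : PowerSeries F4 := PowerSeries.X with hX
  set A : PowerSeries F4 := PowerSeries.comp φ φ with hA
  have hchar : (2 : PowerSeries F4) = 0 := by
    have h2 : (2 : F4) = 0 := by
      have := CharP.cast_eq_zero F4 2
      simpa using this
    calc (2 : PowerSeries F4) = PowerSeries.C 2 := by
          rw [map_ofNat]
      _ = 0 := by rw [h2, map_zero]
  -- substitute φ into the equation
  have h1 : φ ^ 2 * A ^ 2 + A + φ = 0 := by
    have := congrArg (fun y => PowerSeries.comp y φ) heq
    simp only [hX] at this
    rw [show (PowerSeries.X : PowerSeries F4) ^ 2 * φ ^ 2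
          = PowerSeries.X * PowerSeries.X * (φ * φ) by ring] at this
    rw [aux_comp_add, aux_comp_add, aux_comp_mul h0, aux_comp_mul h0, aux_comp_mul h0,
      aux_comp_X h0] at this
    have hz : (0 : PowerSeries F4).comp φ = 0 := by
      ext n; simp [aux_coeff_comp]
    rw [hz] at this
    rw [← hA] at this
    linear_combination this
  have h2 : φ ^ 2 * X ^ 2 + X + φ = 0 := by linear_combination heq
  have key : (A + X) * (φ ^ 2 * (A + X) + 1) = 0 := by
    linear_combination h1 + h2 + (φ ^ 2 * A * X - φ) * hchar
  have hne : φ ^ 2 * (A + X) + 1 ≠ 0 := by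
    intro hcon
    have := congrArg (PowerSeries.constantCoeff) hcon
    simp [h0] at this
  have hAX : A + X = 0 := by
    rcases mul_eq_zero.mp key with hh | hh
    · exact hh
    · exact absurd hh hne
  constructor
  · have : A = X := by linear_combination hAX - X * hchar
    exact this
  · intro hφ
    rw [hφ] at heq
    have := congrArg (PowerSeries.coeff 4) heq
    rw [show (PowerSeries.X : PowerSeries F4) ^ 2 * PowerSeries.X ^ 2
          = PowerSeries.X ^ 4 by ring] at this
    simp [hX, PowerSeries.coeff_X_pow, PowerSeries.coeff_X] at this
end
end

section
/- Let F_4 = {0,1,s,s^2} with s^2+s+1=0, let K = F_4((u)), M_0 = K(Y) with Y^4+Y = u^{-1}, and for κ ∈ K let L_κ = M_0(α) with α^2 − α = Y^3 + κ. If κ ∈ K has v_K(κ) = −r with r ≥ 3 odd and leading coefficient c ∈ F_4^×, then κ ≡ −c·Y^{4r−3} + ℘(c^2 Y^{2r}) modulo elements of valuation > −(4r−3) in M_0 (valuation normalized so v_{M_0}(Y^{-1}) = 1), so L_κ/M_0 is a C_2-extension with ramification break 4r − 3 = 1 + 4(r−1). -/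
section aux
variable {R : Type*} [Field R] (w : AddValuation R (WithTop ℤ))

lemma pb_natcast_nonneg (n : ℕ) : (0 : WithTop ℤ) ≤ w (n : R) := by
  induction n with
  | zero => simp [w.map_zero]
  | succ k ih =>
      push_cast
      exact w.map_le_add ih (le_of_eq w.map_one.symm)

lemma pb_pow_val (x : R) (k : ℤ) (hx : w x = (k : WithTop ℤ)) (n : ℕ) :
    w (x ^ n) = ((n * k : ℤ) : WithTop ℤ) := by
  induction n with
  | zero => simp [w.map_one]
  | succ m ih =>
      have h : ((m : ℤ) * k) + k = ((m + 1 : ℕ) : ℤ) * k := by push_cast; ring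
      rw [pow_succ, w.map_mul, ih, hx, ← WithTop.coe_add, h]

lemma pb_binom (t : R) (ht : (0 : WithTop ℤ) ≤ w t) (n : ℕ) :
    ∃ S : R, (1 + t) ^ n = 1 + n * t + t ^ 2 * S ∧ (0 : WithTop ℤ) ≤ w S := by
  induction n with
  | zero => exact ⟨0, by ring, by simp [w.map_zero]⟩
  | succ m ih =>
      obtain ⟨S, hS, hwS⟩ := ih
      refine ⟨S + (m : R) + t * S, ?_, ?_⟩
      · rw [pow_succ, hS]; push_cast; ring
      · refine w.map_le_add (w.map_le_add hwS (pb_natcast_nonneg w m)) ?_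
        rw [w.map_mul]
        calc (0 : WithTop ℤ) = 0 + 0 := by simp
        _ ≤ w t + w S := add_le_add ht hwS

end aux


lemma pb_part3 {M₀ : Type} [Field M₀] [CharP M₀ 2] (w : AddValuation M₀ (WithTop ℤ))
    (r : ℕ) (hr : 3 ≤ r) (a e b y0 : M₀)
    (hab : b = a - (e ^ 2 - e))
    (hwb : w b = ((-(4 * (r : ℤ)) + 3 : ℤ) : WithTop ℤ))
    (hwy0 : w y0 = ((2 * (r : ℤ) - 1 : ℤ) : WithTop ℤ))
    (L : Type) [Field L] [Algebra M₀ L] (α : L)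
    (hα : α ^ 2 - α = algebraMap M₀ L a)
    (hadj : IntermediateField.adjoin M₀ {α} = ⊤) :
    Module.finrank M₀ L = 2 ∧
    ∃ wL : AddValuation L (WithTop ℤ),
      (∀ x : M₀, x ≠ 0 → wL (algebraMap M₀ L x) = 2 * w x) ∧
      ∃ πL : L, wL πL = ((1 : ℤ) : WithTop ℤ) ∧
        ∀ σ : L ≃ₐ[M₀] L, σ ≠ 1 →
          wL (σ πL - πL) = ((4 * (r : ℤ) - 2 : ℤ) : WithTop ℤ) := by
  have h2 : (2 : M₀) = 0 := by exact_mod_cast CharP.cast_eq_zero M₀ 2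
  haveI : CharP L 2 := charP_of_injective_algebraMap (algebraMap M₀ L).injective 2
  have h2L : (2 : L) = 0 := by exact_mod_cast CharP.cast_eq_zero L 2
  set A0 := algebraMap M₀ L with hA0
  have hb0 : b ≠ 0 := by
    intro h; rw [h, w.map_zero] at hwb; exact WithTop.top_ne_coe hwb
  -- b is not of the form m^2 - m
  have hnb : ∀ m : M₀, m ^ 2 - m ≠ b := by
    intro m hm
    rcases eq_or_ne m 0 with h0 | h0
    · rw [h0] at hm; simp at hm; exact hb0 hm.symm
    obtain ⟨k, hk⟩ := WithTop.ne_top_iff_exists.mp (w.ne_top_iff.mpr h0)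
    have hm2 : w (m ^ 2) = ((2 * k : ℤ) : WithTop ℤ) := by
      rw [pow_two, w.map_mul, ← hk, ← WithTop.coe_add]
      norm_cast; ring
    rcases lt_or_ge k 0 with hneg | hpos
    · have hlt : w (m ^ 2) < w m := by
        rw [hm2, ← hk]; exact_mod_cast (by omega : (2 * k : ℤ) < k)
      have := AddValuation.map_sub_eq_of_lt_left w hlt
      rw [hm, hwb, hm2] at this
      have : (-(4 * (r : ℤ)) + 3 : ℤ) = 2 * k := by exact_mod_cast this
      omega
    · have hge := w.map_sub (m ^ 2) m
      rw [hm, hwb, hm2, ← hk, ← WithTop.coe_min] at hge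
      have : min (2 * k) k ≤ -(4 * (r : ℤ)) + 3 := by exact_mod_cast hge
      omega
  -- β
  set β : L := α - A0 e with hβdef
  have hβ : β ^ 2 - β = A0 b := by
    have hmap : A0 b = A0 a - ((A0 e) ^ 2 - A0 e) := by
      rw [hab, map_sub, map_sub, map_pow]
    rw [hβdef, hmap, ← hα]
    linear_combination ((A0 e) ^ 2 - α * A0 e) * h2L
  have hβ2 : β ^ 2 = β + A0 b := by linear_combination hβ
  have hβnr : ∀ m : M₀, β ≠ A0 m := by
    intro m h
    apply hnb m
    apply (algebraMap M₀ L).injective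
    rw [map_sub, map_pow, ← hA0, ← h, hβ]
  have hαnr : α ∉ (algebraMap M₀ L).range := by
    rintro ⟨m, hm⟩
    exact hβnr (m - e) (by rw [hβdef, map_sub, hm, hA0])
  -- integrality
  have hint : IsIntegral M₀ α := by
    refine ⟨Polynomial.X ^ 2 - (Polynomial.X + Polynomial.C a), ?_, ?_⟩
    · have hd : (Polynomial.X + Polynomial.C a : Polynomial M₀).degree ≤ 1 := by
        simpa using Polynomial.degree_X_add_C_le a
      exact Polynomial.monic_X_pow_sub (by simpa using hd)
    · simp only [Polynomial.eval₂_sub, Polynomial.eval₂_pow, Polynomial.eval₂_X,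
        Polynomial.eval₂_add, Polynomial.eval₂_C]
      rw [← hA0]
      linear_combination hα
  have haev : Polynomial.aeval α (Polynomial.X ^ 2 - (Polynomial.X + Polynomial.C a)) = 0 := by
    simp only [map_sub, map_add, map_pow, Polynomial.aeval_X, Polynomial.aeval_C]
    rw [← hA0]
    linear_combination hα
  have hmon : (Polynomial.X ^ 2 - (Polynomial.X + Polynomial.C a) : Polynomial M₀).Monic := by
    have hd : (Polynomial.X + Polynomial.C a : Polynomial M₀).degree ≤ 1 := by
      simpa using Polynomial.degree_X_add_C_le a
    exact Polynomial.monic_X_pow_sub (by simpa using hd)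
  have hdeg2 : (minpoly M₀ α).natDegree = 2 := by
    have hle := minpoly.min (A := M₀) (x := α) hmon haev
    have hnd : (Polynomial.X ^ 2 - (Polynomial.X + Polynomial.C a) : Polynomial M₀).natDegree = 2 := by
      compute_degree!
    have hle' : (minpoly M₀ α).natDegree ≤ 2 := by
      have := Polynomial.natDegree_le_natDegree hle
      omega
    have hge : 2 ≤ (minpoly M₀ α).natDegree := (minpoly.two_le_natDegree_iff hint).mpr hαnr
    omega
  -- finrank
  have hfr : Module.finrank M₀ L = 2 := by
    have h1 := IntermediateField.adjoin.finrank hint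
    rw [hdeg2, hadj] at h1
    rwa [LinearEquiv.finrank_eq (IntermediateField.topEquiv (F := M₀) (E := L)).toLinearEquiv] at h1
  haveI hFD : FiniteDimensional M₀ L := by
    have hfd := IntermediateField.adjoin.finiteDimensional hint
    rw [hadj] at hfd
    exact LinearEquiv.finiteDimensional
      (IntermediateField.topEquiv (F := M₀) (E := L)).toLinearEquiv
  -- basis 1, β
  have hli : LinearIndependent M₀ ![(1 : L), β] := by
    rw [LinearIndependent.pair_iff]
    intro s t hst
    rw [Algebra.smul_def, Algebra.smul_def, mul_one, ← hA0] at hst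
    by_cases ht : t = 0
    · refine ⟨?_, ht⟩
      rw [ht, map_zero, zero_mul, add_zero] at hst
      exact (map_eq_zero_iff A0 (algebraMap M₀ L).injective).mp hst
    · exfalso
      apply hβnr (-(s / t))
      have hAt : A0 t ≠ 0 := fun h =>
        ht ((map_eq_zero_iff A0 (algebraMap M₀ L).injective).mp h)
      rw [map_neg, map_div₀]
      field_simp
      linear_combination hst
  have hcard : Fintype.card (Fin 2) = Module.finrank M₀ L := by simp [hfr]
  set B := basisOfLinearIndependentOfCardEqFinrank hli hcard with hBdef
  have hB0 : B 0 = 1 := by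
    rw [hBdef, coe_basisOfLinearIndependentOfCardEqFinrank]; rfl
  have hB1 : B 1 = β := by
    rw [hBdef, coe_basisOfLinearIndependentOfCardEqFinrank]; rfl
  have hspan : ∀ ξ : L, ξ = A0 (B.repr ξ 0) + A0 (B.repr ξ 1) * β := by
    intro ξ
    conv_lhs => rw [← B.sum_repr ξ]
    rw [Fin.sum_univ_two, hB0, hB1, Algebra.smul_def, Algebra.smul_def, mul_one, ← hA0]
  have hcoord : ∀ x y : M₀,
      B.repr (A0 x + A0 y * β) 0 = x ∧ B.repr (A0 x + A0 y * β) 1 = y := by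
    intro x y
    have hxy : A0 x + A0 y * β = x • B 0 + y • B 1 := by
      rw [hB0, hB1, Algebra.smul_def, Algebra.smul_def, mul_one, hA0]
    constructor <;>
      simp [hxy, Module.Basis.repr_self, Finsupp.single_apply]
  -- multiplication in coordinates
  have hmulc : ∀ x y x' y' : M₀, (A0 x + A0 y * β) * (A0 x' + A0 y' * β)
      = A0 (x * x' + b * (y * y')) + A0 (x * y' + x' * y + y * y') * β := by
    intro x y x' y'
    rw [map_add, map_mul, map_add, map_add, map_mul, map_mul, map_mul, map_mul]
    linear_combination (A0 y * A0 y') * hβ2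
  -- the norm form
  set Nm : L → M₀ := fun ξ => B.repr ξ 0 ^ 2 + B.repr ξ 0 * B.repr ξ 1 + b * B.repr ξ 1 ^ 2
    with hNmdef
  have hNmA : ∀ x y : M₀, Nm (A0 x + A0 y * β) = x ^ 2 + x * y + b * y ^ 2 := by
    intro x y
    rw [hNmdef]
    simp only [(hcoord x y).1, (hcoord x y).2]
  have hNm_mul : ∀ ξ η : L, Nm (ξ * η) = Nm ξ * Nm η := by
    intro ξ η
    conv_lhs => rw [hspan ξ, hspan η]
    conv_rhs => rw [hspan ξ, hspan η]
    rw [hmulc, hNmA, hNmA, hNmA]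
    linear_combination (b * (2 * (B.repr ξ 0) * (B.repr η 0) * (B.repr ξ 1) * (B.repr η 1)
      + (B.repr ξ 0) * (B.repr ξ 1) * (B.repr η 1) ^ 2
      + (B.repr ξ 1) ^ 2 * (B.repr η 0) * (B.repr η 1)
      + (B.repr ξ 1) ^ 2 * (B.repr η 1) ^ 2)) * h2
  -- the key valuation computation
  have hkey : ∀ x y : M₀, w (x ^ 2 + x * y + b * y ^ 2) = min (w (x ^ 2)) (w (b * y ^ 2)) := by
    intro x y
    rcases eq_or_ne y 0 with hy | hy
    · simp [hy, w.map_zero]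
    rcases eq_or_ne x 0 with hx | hx
    · simp [hx, w.map_zero]
    obtain ⟨k, hk⟩ := WithTop.ne_top_iff_exists.mp (w.ne_top_iff.mpr hx)
    obtain ⟨l, hl⟩ := WithTop.ne_top_iff_exists.mp (w.ne_top_iff.mpr hy)
    have hx2 : w (x ^ 2) = ((2 * k : ℤ) : WithTop ℤ) := by
      rw [pow_two, w.map_mul, ← hk, ← WithTop.coe_add]
      norm_cast; ring
    have hby2 : w (b * y ^ 2) = ((-(4 * (r : ℤ)) + 3 + 2 * l : ℤ) : WithTop ℤ) := by
      rw [w.map_mul, hwb, pow_two, w.map_mul, ← hl, ← WithTop.coe_add, ← WithTop.coe_add]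
      norm_cast; ring
    have hxy : w (x * y) = ((k + l : ℤ) : WithTop ℤ) := by
      rw [w.map_mul, ← hk, ← hl]; norm_cast
    rcases lt_or_gt_of_ne (show ((2 * k : ℤ) : WithTop ℤ) ≠ ((-(4 * (r : ℤ)) + 3 + 2 * l : ℤ) : WithTop ℤ) by
        exact_mod_cast (by omega : (2 * k : ℤ) ≠ (-(4 * (r : ℤ)) + 3 + 2 * l : ℤ))) with hlt | hgt
    · have hlt' : (2 * k : ℤ) < -(4 * (r : ℤ)) + 3 + 2 * l := by exact_mod_cast hlt
      rw [add_assoc, AddValuation.map_add_eq_of_lt_left, hx2]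
      · rw [hby2]; exact (min_eq_left hlt.le).symm
      · refine lt_of_lt_of_le ?_ (w.map_add _ _)
        rw [hx2, hxy, hby2, ← WithTop.coe_min]
        exact_mod_cast (by omega : (2 * k : ℤ) < min (k + l) (-(4 * (r : ℤ)) + 3 + 2 * l))
    · have hgt' : (-(4 * (r : ℤ)) + 3 + 2 * l : ℤ) < 2 * k := by exact_mod_cast hgt
      rw [AddValuation.map_add_eq_of_lt_right, hby2]
      · rw [hx2]; exact (min_eq_right hgt.le).symm
      · refine lt_of_lt_of_le ?_ (w.map_add _ _)
        rw [hby2, hx2, hxy, ← WithTop.coe_min]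
        exact_mod_cast (by omega : (-(4 * (r : ℤ)) + 3 + 2 * l : ℤ) < min (2 * k) (k + l))
  -- the valuation on L
  set v : L → WithTop ℤ := fun ξ => w (Nm ξ) with hvdef
  have hv0 : v 0 = ⊤ := by
    have h0' : (0 : L) = A0 0 + A0 0 * β := by simp
    show w (Nm 0) = ⊤
    have : Nm 0 = 0 := by
      rw [congrArg Nm h0', hNmA]; ring
    rw [this, w.map_zero]
  have hv1 : v 1 = 0 := by
    have h1' : (1 : L) = A0 1 + A0 0 * β := by simp
    show w (Nm 1) = 0
    have : Nm 1 = 1 := by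
      rw [congrArg Nm h1', hNmA]; ring
    rw [this, w.map_one]
  have hvmul : ∀ ξ η : L, v (ξ * η) = v ξ + v η := by
    intro ξ η
    show w (Nm (ξ * η)) = w (Nm ξ) + w (Nm η)
    rw [hNm_mul, w.map_mul]
  have hNmval : ∀ ξ : L, v ξ = min (w ((B.repr ξ 0) ^ 2)) (w (b * (B.repr ξ 1) ^ 2)) := by
    intro ξ
    show w (Nm ξ) = _
    have : Nm ξ = B.repr ξ 0 ^ 2 + B.repr ξ 0 * B.repr ξ 1 + b * B.repr ξ 1 ^ 2 := rfl
    rw [this, hkey]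
  have hsq : ∀ u u' : M₀, min (w (u ^ 2)) (w (u' ^ 2)) ≤ w ((u + u') ^ 2) := by
    intro u u'
    have h1 := w.map_add u u'
    rcases le_total (w u) (w u') with hle | hle
    · have hm : w u ≤ w (u + u') := le_trans (by rw [min_eq_left hle]) h1
      calc min (w (u ^ 2)) (w (u' ^ 2)) ≤ w (u ^ 2) := min_le_left _ _
        _ = w u + w u := by rw [pow_two, w.map_mul]
        _ ≤ w (u + u') + w (u + u') := add_le_add hm hm
        _ = w ((u + u') ^ 2) := by rw [pow_two, w.map_mul]
    · have hm : w u' ≤ w (u + u') := le_trans (by rw [min_eq_right hle]) h1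
      calc min (w (u ^ 2)) (w (u' ^ 2)) ≤ w (u' ^ 2) := min_le_right _ _
        _ = w u' + w u' := by rw [pow_two, w.map_mul]
        _ ≤ w (u + u') + w (u + u') := add_le_add hm hm
        _ = w ((u + u') ^ 2) := by rw [pow_two, w.map_mul]
  have hvadd : ∀ ξ η : L, min (v ξ) (v η) ≤ v (ξ + η) := by
    intro ξ η
    have hpx : B.repr (ξ + η) 0 = B.repr ξ 0 + B.repr η 0 := by
      rw [map_add]; rfl
    have hpy : B.repr (ξ + η) 1 = B.repr ξ 1 + B.repr η 1 := by
      rw [map_add]; rfl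
    rw [hNmval, hNmval, hNmval, hpx, hpy]
    have hB : min (w (b * (B.repr ξ 1) ^ 2)) (w (b * (B.repr η 1) ^ 2))
        ≤ w (b * (B.repr ξ 1 + B.repr η 1) ^ 2) := by
      rw [w.map_mul, w.map_mul, w.map_mul, min_add_add_left]
      exact add_le_add le_rfl (hsq _ _)
    refine le_min (le_trans ?_ (hsq _ _)) (le_trans ?_ hB)
    · exact le_min ((min_le_left _ _).trans (min_le_left _ _))
        ((min_le_right _ _).trans (min_le_left _ _))
    · exact le_min ((min_le_left _ _).trans (min_le_right _ _))
        ((min_le_right _ _).trans (min_le_right _ _))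
  set wL : AddValuation L (WithTop ℤ) := AddValuation.of v hv0 hv1 hvadd hvmul with hwLdef
  have hwLap : ∀ ξ : L, wL ξ = v ξ := fun _ => rfl
  have hvA0 : ∀ x : M₀, v (A0 x) = w (x ^ 2) := by
    intro x
    have h' : A0 x = A0 x + A0 0 * β := by simp
    show w (Nm (A0 x)) = _
    rw [congrArg Nm h', hNmA]
    congr 1
    ring
  refine ⟨hfr, wL, ?_, ?_⟩
  · intro x hx
    obtain ⟨k, hk⟩ := WithTop.ne_top_iff_exists.mp (w.ne_top_iff.mpr hx)
    rw [hwLap, hvA0, pow_two, w.map_mul, ← hk]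
    norm_cast
    rw [show (2 : WithTop ℤ) = ((2 : ℤ) : WithTop ℤ) from rfl, ← WithTop.coe_mul]
    norm_cast
    ring
  · -- uniformizer and ramification
    have hy00 : y0 ≠ 0 := by
      intro h
      rw [h, w.map_zero] at hwy0
      exact WithTop.top_ne_coe hwy0
    have hvy0β : ∀ z : M₀, v (A0 z * β) = w (b * z ^ 2) := by
      intro z
      have h' : A0 z * β = A0 0 + A0 z * β := by simp
      show w (Nm (A0 z * β)) = _
      rw [congrArg Nm h', hNmA]
      congr 1
      ring
    refine ⟨A0 y0 * β, ?_, ?_⟩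
    · rw [hwLap, hvy0β, w.map_mul, hwb, pow_two, w.map_mul, hwy0,
        ← WithTop.coe_add, ← WithTop.coe_add]
      exact_mod_cast (by ring :
        (-(4*(r:ℤ))+3) + ((2*(r:ℤ)-1) + (2*(r:ℤ)-1)) = (1:ℤ))
    · intro σ hσ
      have hσa : σ α ^ 2 - σ α = A0 a := by
        have hh := congrArg σ hα
        rw [map_sub, map_pow] at hh
        rw [hh, hA0]
        exact σ.commutes a
      have hγ2 : (σ α - α) ^ 2 = σ α - α := by
        linear_combination hσa - hα + (α ^ 2 - σ α * α) * h2L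
      have hcases : σ α - α = 0 ∨ σ α - α = 1 := by
        rcases mul_eq_zero.mp (show (σ α - α) * ((σ α - α) - 1) = 0 by
          linear_combination hγ2) with h | h
        · exact Or.inl h
        · exact Or.inr (by linear_combination h)
      rcases hcases with h0 | h1
      · exfalso
        apply hσ
        have hσα : σ α = α := by linear_combination h0
        have hσβ : σ β = β := by
          rw [hβdef, map_sub, hσα, hA0, σ.commutes]
        ext ξ
        conv_lhs => rw [hspan ξ]
        rw [map_add, map_mul, hσβ, hA0, σ.commutes, σ.commutes, ← hA0, ← hspan ξ]
        rfl
      · have hσβ : σ β = β + 1 := by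
          rw [hβdef, map_sub, hA0, σ.commutes, ← hA0]
          linear_combination h1
        have hdiff : σ (A0 y0 * β) - A0 y0 * β = A0 y0 := by
          rw [map_mul, hσβ, hA0, σ.commutes, ← hA0]
          ring
        rw [hdiff, hwLap, hvA0, pow_two, w.map_mul, hwy0, ← WithTop.coe_add]
        exact_mod_cast (by ring :
          ((2*(r:ℤ)-1) + (2*(r:ℤ)-1)) = (4*(r:ℤ)-2))

/-- in `M₀` (with normalized valuation `w`, `w(Y) = −1`, so that
`u⁻¹ = Y⁴ + Y`), if `κ ∈ K` has `v_K(κ) = −r` (`r ≥ 3` odd) with leading coefficient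
`c ∈ F₄ˣ`, i.e. `w(κ − c(Y⁴+Y)^r) ≥ −4r+4`, then
`κ ≡ −c·Y^{4r−3} + ℘(c²Y^{2r})` modulo elements of `w`-value `> −(4r−3)`; hence
`w(Y³ + κ − ℘(c²Y^{2r})) = −(4r−3)` and `L_κ = M₀(α)` with `α² − α = Y³ + κ` is a
`C₂`-extension of `M₀` with ramification break `4r − 3 = 1 + 4(r−1)`. -/
theorem perturbed_break (M₀ : Type) [Field M₀] [CharP M₀ 2]
    (w : AddValuation M₀ (WithTop ℤ)) (Y : M₀) (hwY : w Y = ((-1 : ℤ) : WithTop ℤ))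
    (c : M₀) (hc : c ≠ 0) (hc3 : c ^ 3 = 1)
    (r : ℕ) (hr : 3 ≤ r) (hodd : Odd (r : ℤ))
    (κ : M₀)
    (hκ : ((-4 * (r : ℤ) + 4 : ℤ) : WithTop ℤ) ≤ w (κ - c * (Y ^ 4 + Y) ^ r)) :
    ((-4 * (r : ℤ) + 4 : ℤ) : WithTop ℤ) ≤
        w (κ + c * Y ^ (4 * r - 3) - ((c ^ 2 * Y ^ (2 * r)) ^ 2 - c ^ 2 * Y ^ (2 * r))) ∧
    w (Y ^ 3 + (κ - ((c ^ 2 * Y ^ (2 * r)) ^ 2 - c ^ 2 * Y ^ (2 * r)))) =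
        ((-(4 * (r : ℤ) - 3) : ℤ) : WithTop ℤ) ∧
    ∀ (L : Type) [Field L] [Algebra M₀ L] (α : L),
      α ^ 2 - α = algebraMap M₀ L (Y ^ 3 + κ) →
      IntermediateField.adjoin M₀ {α} = ⊤ →
      Module.finrank M₀ L = 2 ∧
      ∃ wL : AddValuation L (WithTop ℤ),
        (∀ x : M₀, x ≠ 0 → wL (algebraMap M₀ L x) = 2 * w x) ∧
        ∃ πL : L, wL πL = ((1 : ℤ) : WithTop ℤ) ∧
          ∀ σ : L ≃ₐ[M₀] L, σ ≠ 1 →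
            wL (σ πL - πL) = ((4 * (r : ℤ) - 2 : ℤ) : WithTop ℤ) := by
  have h2 : (2 : M₀) = 0 := by
    have := CharP.cast_eq_zero M₀ 2; exact_mod_cast this
  have hY0 : Y ≠ 0 := by
    intro h; rw [h, w.map_zero] at hwY; exact (WithTop.top_ne_coe) hwY
  have hwc : w c = 0 := by
    have h3 : w (c ^ 3) = ((3 * 0 : ℤ) : WithTop ℤ) → True := fun _ => trivial
    have hct : w c ≠ ⊤ := w.ne_top_iff.mpr hc
    obtain ⟨m, hm⟩ := WithTop.ne_top_iff_exists.mp hct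
    have h4 : w (c ^ 3) = ((3 * m : ℤ) : WithTop ℤ) := pb_pow_val w c m hm.symm 3
    rw [hc3, w.map_one] at h4
    have : (3 : ℤ) * m = 0 := by exact_mod_cast h4.symm
    have hm0 : m = 0 := by omega
    rw [← hm, hm0]; rfl
  have hwYn : ∀ n : ℕ, w (Y ^ n) = ((-(n : ℤ) : ℤ) : WithTop ℤ) := by
    intro n
    have := pb_pow_val w Y (-1) hwY n
    simpa using this
  have hwYi : w (Y⁻¹) = ((1 : ℤ) : WithTop ℤ) := by
    rw [w.map_inv, hwY]; rfl
  have hwYin : ∀ n : ℕ, w ((Y⁻¹) ^ n) = ((n : ℤ) : WithTop ℤ) := by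
    intro n
    have := pb_pow_val w (Y⁻¹) 1 hwYi n
    simpa using this
  -- binomial expansion
  obtain ⟨S, hS, hwS⟩ := pb_binom w ((Y⁻¹) ^ 3) (by rw [hwYin]; exact_mod_cast (by norm_num : (0:ℤ) ≤ 3)) r
  have hrM : ((r : M₀)) = 1 := by
    obtain ⟨k, hk⟩ := hodd
    have hk' : r = 2 * k.toNat + 1 := by omega
    rw [hk']; push_cast; rw [h2]; ring
  have hYY : Y ^ 4 + Y = Y ^ 4 * (1 + (Y⁻¹) ^ 3) := by
    field_simp
  have hexp : (Y ^ 4 + Y) ^ r = Y ^ (4 * r) + Y ^ (4 * r - 3) + Y ^ (4 * r - 6) * S := by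
    rw [hYY, mul_pow, hS, hrM, ← pow_mul]
    have e1 : Y ^ (4 * r) * (Y⁻¹ ^ 3) = Y ^ (4 * r - 3) := by
      have : Y ^ (4 * r) = Y ^ (4 * r - 3) * Y ^ 3 := by
        rw [← pow_add]; congr 1; omega
      rw [this]; field_simp
    have e2 : Y ^ (4 * r) * (Y⁻¹ ^ 3) ^ 2 = Y ^ (4 * r - 6) := by
      have : Y ^ (4 * r) = Y ^ (4 * r - 6) * Y ^ 6 := by
        rw [← pow_add]; congr 1; omega
      rw [this, ← pow_mul]; field_simp
      rw [one_div, inv_pow, show 3 * 2 = 6 from rfl, mul_inv_cancel₀ (pow_ne_zero 6 hY0)]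
    calc Y ^ (4*r) * (1 + 1 * Y⁻¹ ^ 3 + (Y⁻¹ ^ 3) ^ 2 * S)
        = Y ^ (4*r) + Y ^ (4*r) * (Y⁻¹ ^ 3) + Y ^ (4*r) * (Y⁻¹ ^ 3) ^ 2 * S := by ring
      _ = Y ^ (4 * r) + Y ^ (4 * r - 3) + Y ^ (4 * r - 6) * S := by rw [e1, e2]
  have hc4 : c ^ 4 = c := by
    calc c ^ 4 = c ^ 3 * c := by ring
    _ = c := by rw [hc3]; ring
  have hY4r : (Y ^ (2 * r)) ^ 2 = Y ^ (4 * r) := by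
    rw [← pow_mul]; congr 1; omega
  -- part 1
  have hEeq : κ + c * Y ^ (4 * r - 3) - ((c ^ 2 * Y ^ (2 * r)) ^ 2 - c ^ 2 * Y ^ (2 * r)) =
      (κ - c * (Y ^ 4 + Y) ^ r) + c * (Y ^ (4 * r - 6) * S) + c ^ 2 * Y ^ (2 * r) := by
    rw [hexp]
    have h4 : (c^2)^2 = c := by
      calc (c^2)^2 = c * c^3 := by ring
      _ = c := by rw [hc3, mul_one]
    linear_combination (c * Y ^ (4*r-3)) * h2 - (Y^(2*r))^2 * h4 - c * hY4r
  have hpart1 : ((-4 * (r : ℤ) + 4 : ℤ) : WithTop ℤ) ≤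
      w (κ + c * Y ^ (4 * r - 3) - ((c ^ 2 * Y ^ (2 * r)) ^ 2 - c ^ 2 * Y ^ (2 * r))) := by
    rw [hEeq]
    refine w.map_le_add (w.map_le_add hκ ?_) ?_
    · rw [w.map_mul, hwc, zero_add, w.map_mul, hwYn]
      calc ((-4 * (r:ℤ) + 4 : ℤ) : WithTop ℤ) ≤ ((-((4*r-6 : ℕ) : ℤ) : ℤ) : WithTop ℤ) + 0 := by
            rw [add_zero]
            exact_mod_cast (by push_cast; omega : (-4 * (r:ℤ) + 4 : ℤ) ≤ -((4*r-6 : ℕ) : ℤ))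
        _ ≤ _ := add_le_add le_rfl hwS
    · have hcc : w (c ^ 2 * Y ^ (2 * r)) = ((-(2 * (r:ℤ)) : ℤ) : WithTop ℤ) := by
        rw [w.map_mul, pow_two, w.map_mul, hwc, hwYn]
        push_cast; simp
      rw [hcc]
      exact_mod_cast (by omega : (-4 * (r:ℤ) + 4 : ℤ) ≤ -(2 * (r:ℤ)))
  have hwcY : w (c * Y ^ (4 * r - 3)) = ((-4 * (r:ℤ) + 3 : ℤ) : WithTop ℤ) := by
    rw [w.map_mul, hwc, zero_add, hwYn]
    rw [show (-((4*r-3 : ℕ):ℤ) : ℤ) = (-4*(r:ℤ)+3 : ℤ) by omega]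
  have hBeq : Y ^ 3 + (κ - ((c ^ 2 * Y ^ (2 * r)) ^ 2 - c ^ 2 * Y ^ (2 * r))) =
      (κ + c * Y ^ (4 * r - 3) - ((c ^ 2 * Y ^ (2 * r)) ^ 2 - c ^ 2 * Y ^ (2 * r)) + Y ^ 3)
        - c * Y ^ (4 * r - 3) := by ring
  have hpart2 : w (Y ^ 3 + (κ - ((c ^ 2 * Y ^ (2 * r)) ^ 2 - c ^ 2 * Y ^ (2 * r)))) =
      ((-(4 * (r : ℤ) - 3) : ℤ) : WithTop ℤ) := by
    rw [hBeq, AddValuation.map_sub_eq_of_lt_right]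
    · rw [hwcY]
      rw [show (-4*(r:ℤ)+3 : ℤ) = (-(4 * (r : ℤ) - 3) : ℤ) by omega]
    · rw [hwcY]
      refine lt_of_lt_of_le ?_ (w.map_le_add hpart1 ?_)
      · exact_mod_cast (by omega : (-4*(r:ℤ)+3 : ℤ) < (-4 * (r:ℤ) + 4 : ℤ))
      · rw [hwYn]
        exact_mod_cast (by omega : (-4 * (r:ℤ) + 4 : ℤ) ≤ (-((3:ℕ):ℤ) : ℤ))
  refine ⟨hpart1, hpart2, ?_⟩
  intro L _ _ α hα hadj
  have hab : Y ^ 3 + (κ - ((c ^ 2 * Y ^ (2 * r)) ^ 2 - c ^ 2 * Y ^ (2 * r)))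
      = (Y ^ 3 + κ) - ((c ^ 2 * Y ^ (2 * r)) ^ 2 - c ^ 2 * Y ^ (2 * r)) := by ring
  have hwb : w (Y ^ 3 + (κ - ((c ^ 2 * Y ^ (2 * r)) ^ 2 - c ^ 2 * Y ^ (2 * r))))
      = ((-(4 * (r : ℤ)) + 3 : ℤ) : WithTop ℤ) := by
    rw [hpart2, show (-(4 * (r : ℤ) - 3) : ℤ) = (-(4 * (r : ℤ)) + 3 : ℤ) by omega]
  have hwy0 : w ((Y⁻¹) ^ (2 * r - 1)) = ((2 * (r : ℤ) - 1 : ℤ) : WithTop ℤ) := by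
    rw [hwYin, show (((2 * r - 1 : ℕ) : ℤ)) = (2 * (r : ℤ) - 1 : ℤ) by omega]
  exact pb_part3 w r hr (Y ^ 3 + κ) (c ^ 2 * Y ^ (2 * r))
    (Y ^ 3 + (κ - ((c ^ 2 * Y ^ (2 * r)) ^ 2 - c ^ 2 * Y ^ (2 * r))))
    ((Y⁻¹) ^ (2 * r - 1)) hab hwb hwy0 L α hα hadj
end
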